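/- Discrete commutativity theorem: Given sequences (q̃_k, p̃_k) in (ℝ^d)^n × (ℝ^d)^n, the following two systems of equations are equivalent. (Branch 2) q_a^{k+1} = q_a^k + h((1−γ)p_a^k + γ p_a^{k+1})/m_a and p_a^{k+1} = p_a^k − h ∂_{q_a}V(γ q̃_k + (1−γ)q̃_{k+1}) + h ∑_b λ̃_{ab}((1−γ)p_b^k + γ p_b^{k+1})/m_b. (Branch 1) The forced momentum matching equations p_a^k = m_a(q_a^{k+1}−q_a^k)/h + hγ∂_{q_a}V(γq̃_k+(1−γ)q̃_{k+1}) − γ∑_b λ̃_{ab}(q_b^{k+1}−q_b^k) and p_a^{k+1} = m_a(q_a^{k+1}−q_a^k)/h − h(1−γ)∂_{q_a}V(γq̃_k+(1−γ)q̃_{k+1}) + (1−γ)∑_b λ̃_{ab}(q_b^{k+1}−q_b^k). -/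

import Mathlib

open scoped RealInnerProductSpace BigOperators

/-- Discrete commutativity theorem: the forced discrete Hamilton equations (Branch 2)
are equivalent to the forced momentum matching equations (Branch 1). -/
theorem stmt12 {d n : ℕ} (h γ : ℝ) (hh : 0 < h)
    (hγ : γ ∈ Set.Icc (0 : ℝ) 1)
    (m : Fin n → ℝ) (hm : ∀ a, 0 < m a)
    (lamT : Fin n → Fin n → ℝ)
    (gradV : Fin n → (Fin n → EuclideanSpace ℝ (Fin d)) → EuclideanSpace ℝ (Fin d))
    (qk qkp pk pkp : Fin n → EuclideanSpace ℝ (Fin d)) :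
    -- Branch 2: forced discrete Hamilton equations
    ((∀ a, qkp a = qk a + (h / m a) • ((1 - γ) • pk a + γ • pkp a)) ∧
     (∀ a, pkp a = pk a
        - h • gradV a (fun b => γ • qk b + (1 - γ) • qkp b)
        + h • ∑ b, (lamT a b / m b) • ((1 - γ) • pk b + γ • pkp b)))
    ↔
    -- Branch 1: forced momentum matching equations
    ((∀ a, pk a = (m a / h) • (qkp a - qk a)
        + (h * γ) • gradV a (fun b => γ • qk b + (1 - γ) • qkp b)
        - γ • ∑ b, lamT a b • (qkp b - qk b)) ∧
     (∀ a, pkp a = (m a / h) • (qkp a - qk a)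
        - (h * (1 - γ)) • gradV a (fun b => γ • qk b + (1 - γ) • qkp b)
        + (1 - γ) • ∑ b, lamT a b • (qkp b - qk b))) := by
  have hh' : h ≠ 0 := hh.ne'
  have hm' : ∀ a, m a ≠ 0 := fun a => (hm a).ne'
  have key : ∀ a, (m a / h) * (h / m a) = 1 := by
    intro a; field_simp [hm' a]
  have key2 : ∀ a, (h / m a) * (m a / h) = 1 := by
    intro a; rw [mul_comm]; exact key a
  constructor
  · rintro ⟨e1, e2⟩
    have e1' : ∀ a, qkp a - qk a = (h / m a) • ((1 - γ) • pk a + γ • pkp a) := by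
      intro a; rw [e1 a]; abel
    have hsum : ∀ a, ∑ b, lamT a b • (qkp b - qk b)
        = h • ∑ b, (lamT a b / m b) • ((1 - γ) • pk b + γ • pkp b) := by
      intro a
      rw [Finset.smul_sum]
      refine Finset.sum_congr rfl fun b _ => ?_
      rw [e1' b, smul_smul, smul_smul]
      congr 1
      field_simp
    constructor
    · intro a
      rw [hsum a, e1' a, smul_smul, key a, one_smul, e2 a]
      module
    · intro a
      rw [hsum a, e1' a, smul_smul, key a, one_smul, e2 a]
      module
  · rintro ⟨b1, b2⟩
    have w : ∀ a, (1 - γ) • pk a + γ • pkp a = (m a / h) • (qkp a - qk a) := by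
      intro a; rw [b1 a, b2 a]; module
    have e1' : ∀ a, qkp a - qk a = (h / m a) • ((1 - γ) • pk a + γ • pkp a) := by
      intro a; rw [w a, smul_smul, key2 a, one_smul]
    have hsum : ∀ a, ∑ b, lamT a b • (qkp b - qk b)
        = h • ∑ b, (lamT a b / m b) • ((1 - γ) • pk b + γ • pkp b) := by
      intro a
      rw [Finset.smul_sum]
      refine Finset.sum_congr rfl fun b _ => ?_
      rw [e1' b, smul_smul, smul_smul]
      congr 1
      field_simp
    constructor
    · intro a
      rw [← e1' a]; abel
    · intro a
      rw [b1 a, b2 a, hsum a]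
      module
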